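/- Under the hypotheses of the previous context (C is u-bounded relative to B), the code Code(B) is u′-bounded relative to the basis (a′₁,…,a′_{k+1}) with u′ = ku, if and only if u ≥ d(1 + 2/k). -/

import Mathlib

open scoped Classical in
noncomputable def wt {F : Type*} [Field F] {m : ℕ} (v : Fin m → F) : ℕ :=
  (Finset.univ.filter fun p => v p ≠ 0).card

/-- `d` is the minimum distance of the linear code `C`. -/
noncomputable def IsMinDist {F : Type*} [Field F] {m : ℕ} (C : Submodule F (Fin m → F)) (d : ℕ) : Prop :=
  (∀ w ∈ C, w ≠ 0 → d ≤ wt w) ∧ ∃ w ∈ C, w ≠ 0 ∧ wt w = d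

/-- The cyclic-shift vectors of Construction 3.2: `shiftVec n k a t` is the vector in
`F^{(k+1)n}` whose `(k+1)` blocks of size `n` are zero in block `t` and the vectors
`a 0, ..., a (k-1)` read cyclically in the remaining blocks. -/
def shiftVec {F : Type*} [Field F] (n k : ℕ) (a : Fin k → Fin n → F) (t : Fin (k + 1)) :
    Fin ((k + 1) * n) → F :=
  fun p =>
    if h : p.val / n = t.val then 0
    else
      have hn : 0 < n := by
        rcases Nat.eq_zero_or_pos n with h0 | h0
        · exact absurd p.isLt (by simp [h0])
        · exact h0
      have hi : p.val / n < k + 1 :=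
        Nat.div_lt_of_lt_mul (Nat.mul_comm (k + 1) n ▸ p.isLt)
      a ⟨(if t.val ≤ p.val / n then p.val / n - t.val else p.val / n + (k + 1) - t.val) - 1,
          by
            have ht := t.isLt
            generalize hq : p.val / n = q at h hi ⊢
            split_ifs with h2 <;> omega⟩
        ⟨p.val % n, Nat.mod_lt _ hn⟩

/-- `C = span a` is `u`-bounded relative to the ordered basis `a`, with minimum distance `d`:
all basis vectors have weight `u`, their sum has weight `d`, and `u ≥ d(1 + 1/k)`. -/
noncomputable def UBounded {F : Type*} [Field F] {n k : ℕ} (a : Fin k → Fin n → F)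
    (u d : ℕ) : Prop :=
  IsMinDist (Submodule.span F (Set.range a)) d ∧
  (∀ j, wt (a j) = u) ∧ wt (∑ j, a j) = d ∧ d * (k + 1) ≤ u * k


/-!
Split `F^{(k+1)n}` into `k + 1` blocks of length `n`. Block `s` of `∑ₜ cₜ a′ₜ` is
`∑ⱼ c_{s-j-1} aⱼ`, a codeword of `C` which, by linear independence of the `aⱼ`, is nonzero as soon
as `cₜ ≠ 0` for some `t ≠ s`. So a codeword with two nonzero coefficients has all `k + 1` blocks
nonzero and weight at least `(k+1)d`, while a multiple of a single `a′ₜ` has weight `ku ≥ (k+1)d`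
by condition (iii) for `C`. Every block of `∑ₜ a′ₜ` equals `∑ⱼ aⱼ`, so its weight `(k+1)d` is the
minimum distance of `Code(B)`. Condition (iii) for `Code(B)` then reads
`ku ≥ (k+1)d(1 + 1/(k+1))`, i.e. `u ≥ d(1 + 2/k)`.
-/

section

variable {F : Type*} [Field F]

lemma wt_eq_zero_iff {m : ℕ} {v : Fin m → F} : wt v = 0 ↔ v = 0 := by
  simp [wt, Finset.filter_eq_empty_iff, funext_iff]

lemma wt_smul {m : ℕ} {c : F} (hc : c ≠ 0) (v : Fin m → F) : wt (c • v) = wt v := by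
  unfold wt
  congr 1
  ext p
  simp [hc]

lemma finProdFinEquiv_val_div {m n : ℕ} (s : Fin m) (i : Fin n) :
    (finProdFinEquiv (s, i)).val / n = s.val := by
  rw [finProdFinEquiv_apply_val, Nat.add_mul_div_left _ _ i.pos, Nat.div_eq_of_lt i.isLt, zero_add]

lemma finProdFinEquiv_val_mod {m n : ℕ} (s : Fin m) (i : Fin n) :
    (finProdFinEquiv (s, i)).val % n = i.val := by
  rw [finProdFinEquiv_apply_val, Nat.add_mul_mod_self_left, Nat.mod_eq_of_lt i.isLt]

/-- Coordinates `s * n + i`, matching how `shiftVec` reads a position `p` as `(p / n, p % n)`. -/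
def block {m n : ℕ} (v : Fin (m * n) → F) (s : Fin m) : Fin n → F :=
  fun i => v (finProdFinEquiv (s, i))

lemma wt_eq_sum_wt_block {m n : ℕ} (v : Fin (m * n) → F) : wt v = ∑ s, wt (block v s) := by
  simp only [wt, Finset.card_filter]
  rw [← finProdFinEquiv.sum_comp, Fintype.sum_prod_type]
  rfl

variable {n k : ℕ}

lemma block_shiftVec_self (a : Fin k → Fin n → F) (t : Fin (k + 1)) :
    block (shiftVec n k a t) t = 0 := by
  ext i
  exact dif_pos (finProdFinEquiv_val_div t i)

lemma block_shiftVec_of_eq_add_succ (a : Fin k → Fin n → F) {s t : Fin (k + 1)} {j : Fin k}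
    (h : s = t + j.succ) : block (shiftVec n k a t) s = a j := by
  ext i
  have hs : s.val = if k + 1 ≤ t.val + (j.val + 1) then t.val + (j.val + 1) - (k + 1)
      else t.val + (j.val + 1) := by
    rw [h, Fin.val_add_eq_ite, Fin.val_succ]
  have ht := t.isLt
  have hj := j.isLt
  simp only [block, shiftVec, finProdFinEquiv_val_div, finProdFinEquiv_val_mod]
  rw [dif_neg (by split_ifs at hs <;> omega)]
  refine congr_arg₂ a (Fin.ext ?_) (Fin.ext rfl)
  dsimp only
  split_ifs at hs <;> split_ifs <;> omega

lemma block_sum_smul_shiftVec (a : Fin k → Fin n → F) (c : Fin (k + 1) → F) (s : Fin (k + 1)) :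
    block (∑ t, c t • shiftVec n k a t) s = ∑ j, c (s - j.succ) • a j := by
  have hlin : block (∑ t, c t • shiftVec n k a t) s = ∑ t, c t • block (shiftVec n k a t) s := by
    ext i
    simp [block]
  rw [hlin, ← Equiv.sum_comp (Equiv.subLeft s), Fin.sum_univ_succ]
  simp only [Equiv.subLeft_apply, sub_zero, block_shiftVec_self, smul_zero, zero_add,
    block_shiftVec_of_eq_add_succ a (sub_add_cancel s _).symm]

lemma wt_shiftVec (a : Fin k → Fin n → F) (t : Fin (k + 1)) :
    wt (shiftVec n k a t) = ∑ j, wt (a j) := by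
  rw [wt_eq_sum_wt_block, ← Equiv.sum_comp (Equiv.addLeft t), Fin.sum_univ_succ]
  simp only [Equiv.coe_addLeft, add_zero, block_shiftVec_self, wt_eq_zero_iff.mpr, zero_add,
    block_shiftVec_of_eq_add_succ a rfl]

lemma wt_sum_shiftVec (a : Fin k → Fin n → F) :
    wt (∑ t, shiftVec n k a t) = (k + 1) * wt (∑ j, a j) := by
  have h := block_sum_smul_shiftVec a 1
  simp only [Pi.one_apply, one_smul] at h
  simp [wt_eq_sum_wt_block, h]

lemma block_sum_smul_shiftVec_ne_zero {a : Fin k → Fin n → F} (ha : LinearIndependent F a)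
    {c : Fin (k + 1) → F} {s t : Fin (k + 1)} (hts : t ≠ s) (hc : c t ≠ 0) :
    block (∑ t, c t • shiftVec n k a t) s ≠ 0 := by
  obtain ⟨j, hj⟩ := Fin.exists_succ_eq.mpr (sub_ne_zero.mpr hts.symm)
  rw [block_sum_smul_shiftVec]
  intro h
  have hcj := Fintype.linearIndependent_iff.mp ha _ h j
  rw [hj, sub_sub_cancel] at hcj
  exact hc hcj

lemma le_wt_sum_smul_shiftVec {a : Fin k → Fin n → F} (ha : LinearIndependent F a) {d : ℕ}
    (hmin : ∀ w ∈ Submodule.span F (Set.range a), w ≠ 0 → d ≤ wt w) {c : Fin (k + 1) → F}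
    {t₁ t₂ : Fin (k + 1)} (h₁₂ : t₁ ≠ t₂) (hc₁ : c t₁ ≠ 0) (hc₂ : c t₂ ≠ 0) :
    (k + 1) * d ≤ wt (∑ t, c t • shiftVec n k a t) := by
  rw [wt_eq_sum_wt_block]
  calc (k + 1) * d = ∑ _s : Fin (k + 1), d := by simp
    _ ≤ _ := Finset.sum_le_sum fun s _ => hmin _ ?_ ?_
  · rw [block_sum_smul_shiftVec]
    exact Submodule.sum_mem _ fun j _ =>
      Submodule.smul_mem _ _ (Submodule.subset_span (Set.mem_range_self j))
  · by_cases h₁ : t₁ = s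
    · exact block_sum_smul_shiftVec_ne_zero ha (h₁ ▸ h₁₂.symm) hc₂
    · exact block_sum_smul_shiftVec_ne_zero ha h₁ hc₁

lemma isMinDist_span_shiftVec {a : Fin k → Fin n → F} (ha : LinearIndependent F a) {u d : ℕ}
    (hmin : IsMinDist (Submodule.span F (Set.range a)) d) (hu : ∀ j, wt (a j) = u)
    (hsum : wt (∑ j, a j) = d) (hud : d * (k + 1) ≤ u * k) :
    IsMinDist (Submodule.span F (Set.range (shiftVec n k a))) ((k + 1) * d) := by
  obtain ⟨hlow, w, -, hw, hwd⟩ := hmin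
  refine ⟨fun v hv hv0 => ?_, ∑ t, shiftVec n k a t,
    Submodule.sum_mem _ fun t _ => Submodule.subset_span (Set.mem_range_self t), ?_, ?_⟩
  · obtain ⟨c, rfl⟩ := (Submodule.mem_span_range_iff_exists_fun F).mp hv
    by_cases h : ∃ t₁ t₂, t₁ ≠ t₂ ∧ c t₁ ≠ 0 ∧ c t₂ ≠ 0
    · obtain ⟨t₁, t₂, h₁₂, hc₁, hc₂⟩ := h
      exact le_wt_sum_smul_shiftVec ha hlow h₁₂ hc₁ hc₂
    obtain ⟨t₀, hc₀⟩ : ∃ t, c t ≠ 0 := by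
      by_contra! hc
      simp [hc] at hv0
    have hsingle : ∑ t, c t • shiftVec n k a t = c t₀ • shiftVec n k a t₀ :=
      Fintype.sum_eq_single t₀ fun t ht => by
        by_contra hct
        exact h ⟨t, t₀, ht, left_ne_zero_of_smul hct, hc₀⟩
    rw [hsingle, wt_smul hc₀, wt_shiftVec]
    simp only [hu, Finset.sum_const, Finset.card_univ, Fintype.card_fin, smul_eq_mul]
    linarith
  · rw [Ne, ← wt_eq_zero_iff, wt_sum_shiftVec, hsum]
    exact mul_ne_zero k.succ_ne_zero (hwd ▸ mt wt_eq_zero_iff.mp hw)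
  · rw [wt_sum_shiftVec, hsum]

end

theorem shiftVec_bounded_iff (F : Type*) [Field F] (n k : ℕ)
    (a : Fin k → Fin n → F) (ha : LinearIndependent F a) (u d : ℕ)
    (hb : UBounded a u d) :
    UBounded (shiftVec n k a) (k * u) ((k + 1) * d) ↔ d * (k + 2) ≤ u * k := by
  obtain ⟨hmin, hu, hsum, hud⟩ := hb
  have hwt (t : Fin (k + 1)) : wt (shiftVec n k a t) = k * u := by
    simp [wt_shiftVec, hu]
  have hineq : (k + 1) * d * (k + 1 + 1) ≤ k * u * (k + 1) ↔ d * (k + 2) ≤ u * k := by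
    rw [show (k + 1) * d * (k + 1 + 1) = (k + 1) * (d * (k + 2)) by ring,
      show k * u * (k + 1) = (k + 1) * (u * k) by ring]
    exact Nat.mul_le_mul_left_iff k.succ_pos
  simp only [UBounded, isMinDist_span_shiftVec ha hmin hu hsum hud, hwt, wt_sum_shiftVec, hsum,
    hineq, implies_true, true_and]
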